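/- Intertwining identity for the subextremal (Whiting) integral-transform kernel: Fix reals r₋ < r₊ and parameters s ∈ ℝ, ξ, η, γ, L ∈ ℂ, and set A := −2γ/(r₊ − r₋). Then for all x, r ∈ ℝ, the kernel K(x, r) := exp(A(x−r₋)(r−r₋)) satisfies 𝒯̃_x K(x, r) = 𝒯_r K(x, r), where 𝒯̃_x acts on K as a function of x (with r fixed) and 𝒯_r acts on K as a function of r (with x fixed). -/

import Mathlib

open Real Complex Filter Set MeasureTheory

noncomputable section

/-- The confluent Heun operator
`𝒯_r = (r−r₊)(r−r₋) d²/dr² + [(2η+1−s)(r−r₊) + (2ξ+1−s)(r−r₋) + 2γ(r−r₊)(r−r₋)] d/dr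
  + 2γ(1−2s)(r−r₋) + 2γ(1−s)r₋ − 2s − L`. -/
def CHeun (rp rm s : ℝ) (ξ η γ L : ℂ) (f : ℝ → ℂ) (r : ℝ) : ℂ :=
  ((r : ℂ) - (rp : ℂ)) * ((r : ℂ) - (rm : ℂ)) * deriv (deriv f) r
    + ((2 * η + 1 - (s : ℂ)) * ((r : ℂ) - (rp : ℂ))
        + (2 * ξ + 1 - (s : ℂ)) * ((r : ℂ) - (rm : ℂ))
        + 2 * γ * ((r : ℂ) - (rp : ℂ)) * ((r : ℂ) - (rm : ℂ))) * deriv f r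
    + (2 * γ * (1 - 2 * (s : ℂ)) * ((r : ℂ) - (rm : ℂ)) + 2 * γ * (1 - (s : ℂ)) * (rm : ℂ)
        - 2 * (s : ℂ) - L) * f r

/-- The transformed confluent Heun operator
`𝒯̃_x = (x−r₊)(x−r₋) d²/dx² + [(1−2s)(x−r₊) + (1+2ξ+2η)(x−r₋) + 2γ(x−r₊)(x−r₋)] d/dx
  + 2γ(2η+1−s)(x−r₋) + 2γ(1−s)r₋ − 2s − L`. -/
def CtildeHeun (rp rm s : ℝ) (ξ η γ L : ℂ) (f : ℝ → ℂ) (x : ℝ) : ℂ :=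
  ((x : ℂ) - (rp : ℂ)) * ((x : ℂ) - (rm : ℂ)) * deriv (deriv f) x
    + ((1 - 2 * (s : ℂ)) * ((x : ℂ) - (rp : ℂ))
        + (1 + 2 * ξ + 2 * η) * ((x : ℂ) - (rm : ℂ))
        + 2 * γ * ((x : ℂ) - (rp : ℂ)) * ((x : ℂ) - (rm : ℂ))) * deriv f x
    + (2 * γ * (2 * η + 1 - (s : ℂ)) * ((x : ℂ) - (rm : ℂ)) + 2 * γ * (1 - (s : ℂ)) * (rm : ℂ)
        - 2 * (s : ℂ) - L) * f x

/-!
Both operators act on `t ↦ exp (c (t − r₋))` as multiplication by a quadratic polynomial in `c`.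
For the kernel, `c = A(r − r₋)` on the `x`-side and `c = A(x − r₋)` on the `r`-side, and with
`u = x − r₋`, `v = r − r₋` the difference of the two sides factors as
`(A(r₊ − r₋) + 2γ) (A u v (u − v) + (2η + 1 − s) u − (1 − 2s) v) K(x, r)`,
so it vanishes exactly because `A(r₊ − r₋) = −2γ`.
-/

theorem hasDerivAt_cexp_mul_sub (c a : ℂ) (t : ℝ) :
    HasDerivAt (fun t : ℝ => cexp (c * (t - a))) (c * cexp (c * (t - a))) t := by
  simpa [mul_comm] using (((hasDerivAt_id (t : ℂ)).sub_const a).const_mul c).cexp.comp_ofReal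

theorem deriv_cexp_mul_sub (c a : ℂ) :
    deriv (fun t : ℝ => cexp (c * (t - a))) = fun t : ℝ => c * cexp (c * (t - a)) :=
  funext fun t => (hasDerivAt_cexp_mul_sub c a t).deriv

theorem deriv_deriv_cexp_mul_sub (c a : ℂ) :
    deriv (deriv fun t : ℝ => cexp (c * (t - a))) = fun t : ℝ => c ^ 2 * cexp (c * (t - a)) := by
  rw [deriv_cexp_mul_sub]
  funext t
  rw [((hasDerivAt_cexp_mul_sub c a t).const_mul c).deriv, sq, mul_assoc]

/-- **Intertwining identity for the subextremal (Whiting) integral-transform kernel**: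
with `A = −2γ/(r₊ − r₋)`, the kernel `K(x, r) = exp(A(x−r₋)(r−r₋))` satisfies
`𝒯̃_x K(x, r) = 𝒯_r K(x, r)` for all real `x`, `r`. -/
theorem kernel_intertwining_subextremal
    (rm rp : ℝ) (hr : rm < rp) (s : ℝ) (ξ η γ L : ℂ) :
    ∀ x r : ℝ,
      CtildeHeun rp rm s ξ η γ L
          (fun x' : ℝ => Complex.exp
            (-2 * γ / ((rp : ℂ) - (rm : ℂ)) * ((x' : ℂ) - (rm : ℂ)) * ((r : ℂ) - (rm : ℂ)))) x
        = CHeun rp rm s ξ η γ L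
            (fun r' : ℝ => Complex.exp
              (-2 * γ / ((rp : ℂ) - (rm : ℂ)) * ((x : ℂ) - (rm : ℂ)) * ((r' : ℂ) - (rm : ℂ)))) r := by
  intro x r
  set A : ℂ := -2 * γ / ((rp : ℂ) - (rm : ℂ))
  have hA : A * ((rp : ℂ) - rm) = -2 * γ :=
    div_mul_cancel₀ _ (sub_ne_zero.mpr (by exact_mod_cast hr.ne'))
  have hK : (fun x' : ℝ => cexp (A * ((x' : ℂ) - rm) * ((r : ℂ) - rm)))
      = fun x' : ℝ => cexp (A * ((r : ℂ) - rm) * ((x' : ℂ) - rm)) := by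
    simp only [mul_right_comm A]
  rw [CtildeHeun, CHeun, hK, deriv_deriv_cexp_mul_sub, deriv_deriv_cexp_mul_sub,
    deriv_cexp_mul_sub, deriv_cexp_mul_sub]
  beta_reduce
  rw [mul_right_comm A ((r : ℂ) - rm)]
  linear_combination cexp (A * ((x : ℂ) - rm) * ((r : ℂ) - rm)) *
    (A * ((x : ℂ) - rm) * ((r : ℂ) - rm) * ((x : ℂ) - r) + (2 * η + 1 - s) * ((x : ℂ) - rm)
      - (1 - 2 * s) * ((r : ℂ) - rm)) * hA
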